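/- Let L be a Moufang loop and N its associated 3-net. Let M be the group of collineations generated by the Bol reflections of N, M_0 the direction preserving part of M, and S ≅ S_3 the group generated by the three Bol reflections whose axes contain the origin of N. Then Aut(L) is isomorphic to the centralizer C_{Aut(M_0)}(S) of S in Aut(M_0). -/

import Mathlib

open Matrix
/-- A loop: a quasigroup with two-sided neutral element. -/
class Loop (Q : Type*) extends Mul Q, One Q where
  one_mul : ∀ a : Q, 1 * a = a
  mul_one : ∀ a : Q, a * 1 = a
  mul_left_bijective : ∀ a : Q, Function.Bijective (fun x : Q => a * x)
  mul_right_bijective : ∀ a : Q, Function.Bijective (fun x : Q => x * a)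

namespace Loop

variable {Q : Type*} [Loop Q]

/-- The left translation `L_a : x ↦ a * x` of a loop. -/
noncomputable def L (a : Q) : Equiv.Perm Q :=
  Equiv.ofBijective _ (Loop.mul_left_bijective a)

/-- The right translation `R_a : x ↦ x * a` of a loop. -/
noncomputable def R (a : Q) : Equiv.Perm Q :=
  Equiv.ofBijective _ (Loop.mul_right_bijective a)

@[simp] theorem L_apply (a x : Q) : L a x = a * x := rfl
@[simp] theorem R_apply (a x : Q) : R a x = x * a := rfl

/-- The multiplication group of a loop: the permutation group generated by all
left and right translations. -/
noncomputable def Mlt (Q : Type*) [Loop Q] : Subgroup (Equiv.Perm Q) :=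
  Subgroup.closure (Set.range (L : Q → Equiv.Perm Q) ∪ Set.range (R : Q → Equiv.Perm Q))

/-- The inner mapping group of a loop: the elements of the multiplication group
fixing the neutral element. -/
noncomputable def Inn (Q : Type*) [Loop Q] : Subgroup (Equiv.Perm Q) where
  carrier := {f | f ∈ Mlt Q ∧ f 1 = 1}
  one_mem' := ⟨one_mem _, rfl⟩
  mul_mem' := fun ha hb => ⟨mul_mem ha.1 hb.1, by
    simp only [Equiv.Perm.mul_apply, hb.2, ha.2]⟩
  inv_mem' := fun ha => ⟨inv_mem ha.1, by
    conv_lhs => rw [← ha.2]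
    simp⟩

/-- A subloop: a subset containing the neutral element, closed under
multiplication and under both divisions. -/
structure IsSubloop (Q : Type*) [Loop Q] (S : Set Q) : Prop where
  one_mem : (1 : Q) ∈ S
  mul_mem : ∀ x ∈ S, ∀ y ∈ S, x * y ∈ S
  ldiv_mem : ∀ x ∈ S, ∀ y ∈ S, ∀ z, x * z = y → z ∈ S
  rdiv_mem : ∀ x ∈ S, ∀ y ∈ S, ∀ z, z * x = y → z ∈ S

/-- A normal subloop: a subloop invariant under the inner mapping group. -/
def IsNormalSubloop (Q : Type*) [Loop Q] (S : Set Q) : Prop :=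
  IsSubloop Q S ∧ ∀ φ ∈ Inn Q, ∀ x ∈ S, φ x ∈ S

/-- A loop is simple if its only normal subloops are the trivial one and the
whole loop. -/
def IsSimpleLoop (Q : Type*) [Loop Q] : Prop :=
  ∀ S : Set Q, IsNormalSubloop Q S → S = {1} ∨ S = Set.univ

/-- The subloop generated by a subset. -/
def subloopClosure (Q : Type*) [Loop Q] (s : Set Q) : Set Q :=
  ⋂₀ {T : Set Q | IsSubloop Q T ∧ s ⊆ T}

end Loop

/-- The Moufang identity. -/
def IsMoufang (Q : Type*) [Mul Q] : Prop :=
  ∀ x y z : Q, ((x * y) * x) * z = x * (y * (x * z))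

/-! `3`-nets, collineations, Bol reflections, Moufang `3`-nets. -/

/-- A `3`-net: a point set together with three classes of lines such that distinct
lines of the same class are disjoint, two lines of different classes meet in exactly
one point, and every point lies on exactly one line of each class. -/
structure ThreeNet (P : Type*) where
  lines : Fin 3 → Set (Set P)
  disj : ∀ i, ∀ ℓ ∈ lines i, ∀ ℓ' ∈ lines i, ℓ ≠ ℓ' → ℓ ∩ ℓ' = ∅
  meet : ∀ i j, i ≠ j → ∀ ℓ ∈ lines i, ∀ ℓ' ∈ lines j, ∃! p, p ∈ ℓ ∧ p ∈ ℓ'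
  point_line : ∀ (p : P) (i), ∃! ℓ, ℓ ∈ lines i ∧ p ∈ ℓ

namespace ThreeNet

variable {P : Type*} (N : ThreeNet P)

/-- A subset of the point set is a line if it belongs to one of the three classes. -/
def IsLine (ℓ : Set P) : Prop := ∃ i, ℓ ∈ N.lines i

/-- A collineation: a line preserving bijection of the point set. -/
def IsColl (f : Equiv.Perm P) : Prop :=
  (∀ ℓ, N.IsLine ℓ → N.IsLine (f '' ℓ)) ∧ (∀ ℓ, N.IsLine ℓ → N.IsLine (⇑f⁻¹ '' ℓ))

/-- The group of direction preserving collineations: collineations mapping every line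
class to itself. -/
def dirPres : Subgroup (Equiv.Perm P) where
  carrier := {f | ∀ i, ∀ ℓ ∈ N.lines i, f '' ℓ ∈ N.lines i ∧ ⇑f⁻¹ '' ℓ ∈ N.lines i}
  one_mem' := by
    intro i ℓ hℓ
    refine ⟨?_, ?_⟩ <;> simpa using hℓ
  mul_mem' := by
    intro f g hf hg i ℓ hℓ
    constructor
    · have : ⇑(f * g) '' ℓ = f '' (g '' ℓ) := by
        rw [← Set.image_comp]; rfl
      rw [this]
      exact (hf i _ ((hg i ℓ hℓ).1)).1
    · have : ⇑(f * g)⁻¹ '' ℓ = ⇑g⁻¹ '' (⇑f⁻¹ '' ℓ) := by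
        rw [← Set.image_comp]
        rfl
      rw [this]
      exact (hg i _ ((hf i ℓ hℓ).2)).2
  inv_mem' := by
    intro f hf i ℓ hℓ
    refine ⟨(hf i ℓ hℓ).2, ?_⟩
    have : ⇑f⁻¹⁻¹ '' ℓ = f '' ℓ := by rw [inv_inv]
    rw [this]
    exact (hf i ℓ hℓ).1

/-- The geometric specification of the (would-be) Bol reflection `σ_ℓ` with axis `ℓ`
of class `i`: for every point `p`, with `a_j, a_k` the lines through `p` of the other
two classes, meeting the axis in `q_j` resp. `q_k`, the image of `p` is the
intersection of the `j`-line through `q_k` with the `k`-line through `q_j`. -/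
def BolSpec (i : Fin 3) (ℓ : Set P) (f : P → P) : Prop :=
  ∀ j k : Fin 3, j ≠ i → k ≠ i → j ≠ k →
    ∀ p : P, ∀ aj ∈ N.lines j, ∀ ak ∈ N.lines k, p ∈ aj → p ∈ ak →
      ∀ qj, qj ∈ aj → qj ∈ ℓ → ∀ qk, qk ∈ ak → qk ∈ ℓ →
        ∀ bj ∈ N.lines j, ∀ bk ∈ N.lines k, qk ∈ bj → qj ∈ bk →
          f p ∈ bj ∧ f p ∈ bk

/-- `f` is the Bol reflection with axis `ℓ`: it satisfies the geometric specification
of `σ_ℓ` and is a collineation. -/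
def IsBolRefl (ℓ : Set P) (f : Equiv.Perm P) : Prop :=
  (∃ i, ℓ ∈ N.lines i ∧ N.BolSpec i ℓ f) ∧ N.IsColl f

/-- A `3`-net is Moufang if the map `σ_ℓ` is a (Bol reflection) collineation for every
line `ℓ`. -/
def IsMoufangNet : Prop :=
  ∀ i, ∀ ℓ ∈ N.lines i, ∃ f : Equiv.Perm P, N.BolSpec i ℓ f ∧ N.IsColl f

/-- The group `M` generated by all Bol reflections of the net. -/
def MGroup : Subgroup (Equiv.Perm P) :=
  Subgroup.closure {f | ∃ ℓ, N.IsBolRefl ℓ f}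

/-- The direction preserving part `M₀` of the group generated by all Bol
reflections. -/
def MZero : Subgroup (Equiv.Perm P) := N.MGroup ⊓ N.dirPres

/-- The coordinate loop multiplication of a `3`-net, relationally: given the
"horizontal" coordinate line `ℓ₁` (of class `0`) and the "vertical" line `ℓ₂`
(of class `1`) through the origin, `CoordMul ℓ₁ ℓ₂ x y z` says that the product of the
points `x` and `y` of `ℓ₁` in the coordinate loop is the point `z` of `ℓ₁`. -/
def CoordMul (ℓ₁ ℓ₂ : Set P) (x y z : P) : Prop :=
  ∃ t₁ ∈ N.lines 2, y ∈ t₁ ∧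
    ∃ p, p ∈ t₁ ∧ p ∈ ℓ₂ ∧
      ∃ m ∈ N.lines 0, p ∈ m ∧
        ∃ v ∈ N.lines 1, x ∈ v ∧
          ∃ q, q ∈ m ∧ q ∈ v ∧
            ∃ t₂ ∈ N.lines 2, q ∈ t₂ ∧ z ∈ t₂ ∧ z ∈ ℓ₁

end ThreeNet

/-! The `3`-net associated with a loop. -/

namespace Loop

variable {Q : Type*} [Loop Q]

theorem mul_left_cancel' {a x y : Q} (h : a * x = a * y) : x = y :=
  (Loop.mul_left_bijective a).1 h

theorem mul_right_cancel' {a x y : Q} (h : x * a = y * a) : x = y :=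
  (Loop.mul_right_bijective a).1 h

theorem existsUnique_ldiv (a b : Q) : ∃! x, a * x = b := by
  obtain ⟨x, hx⟩ := (Loop.mul_left_bijective a).2 b
  exact ⟨x, hx, fun y hy => mul_left_cancel' (hy.trans hx.symm)⟩

theorem existsUnique_rdiv (a b : Q) : ∃! x, x * a = b := by
  obtain ⟨x, hx⟩ := (Loop.mul_right_bijective a).2 b
  exact ⟨x, hx, fun y hy => mul_right_cancel' (hy.trans hx.symm)⟩

/-- A horizontal line of the `3`-net associated with a loop. -/
def hline (c : Q) : Set (Q × Q) := {p | p.2 = c}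
/-- A vertical line of the `3`-net associated with a loop. -/
def vline (c : Q) : Set (Q × Q) := {p | p.1 = c}
/-- A transversal line of the `3`-net associated with a loop. -/
def tline (c : Q) : Set (Q × Q) := {p | p.1 * p.2 = c}

theorem hline_inj {c c' : Q} (h : hline c = hline c') : c = c' := by
  have : (1, c) ∈ hline c := rfl
  rw [h] at this
  exact this

theorem vline_inj {c c' : Q} (h : vline c = vline c') : c = c' := by
  have : (c, 1) ∈ vline c := rfl
  rw [h] at this
  exact this

theorem tline_inj {c c' : Q} (h : tline c = tline c') : c = c' := by
  have : (c, 1) ∈ tline c := Loop.mul_one c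
  rw [h] at this
  exact (Loop.mul_one c).symm.trans this

/-- The `3`-net associated with a loop: points are pairs `(x, y) ∈ Q × Q`, with
horizontal lines `{(x, c)}`, vertical lines `{(c, y)}` and transversal lines
`{(x, y) | x·y = c}`. -/
def loopNet (Q : Type*) [Loop Q] : ThreeNet (Q × Q) where
  lines := ![{s | ∃ c : Q, s = hline c}, {s | ∃ c : Q, s = vline c},
    {s | ∃ c : Q, s = tline c}]
  disj := by
    intro i
    fin_cases i <;>
      · rintro ℓ ⟨c, rfl⟩ ℓ' ⟨c', rfl⟩ hne
        ext p
        simp only [Set.mem_inter_iff, Set.mem_empty_iff_false, iff_false, not_and]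
        intro h1 h2
        exact hne (by rw [show c = c' from (h1 : _ = c).symm.trans h2])
  meet := by
    have h01 : ∀ c d : Q, ∃! p : Q × Q, p ∈ hline c ∧ p ∈ vline d := by
      intro c d
      refine ⟨(d, c), ⟨rfl, rfl⟩, ?_⟩
      rintro ⟨x, y⟩ ⟨h1, h2⟩
      simp only [hline, vline, Set.mem_setOf_eq] at h1 h2
      rw [h1, h2]
    have h02 : ∀ c d : Q, ∃! p : Q × Q, p ∈ hline c ∧ p ∈ tline d := by
      intro c d
      obtain ⟨x, hx, hxu⟩ := existsUnique_rdiv c d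
      refine ⟨(x, c), ⟨rfl, hx⟩, ?_⟩
      rintro ⟨u, v⟩ ⟨h1, h2⟩
      simp only [hline, tline, Set.mem_setOf_eq] at h1 h2
      subst h1
      rw [hxu u h2]
    have h12 : ∀ c d : Q, ∃! p : Q × Q, p ∈ vline c ∧ p ∈ tline d := by
      intro c d
      obtain ⟨y, hy, hyu⟩ := existsUnique_ldiv c d
      refine ⟨(c, y), ⟨rfl, hy⟩, ?_⟩
      rintro ⟨u, v⟩ ⟨h1, h2⟩
      simp only [vline, tline, Set.mem_setOf_eq] at h1 h2
      subst h1
      rw [hyu v h2]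
    have symm : ∀ (A B : Set (Q × Q)), (∃! p : Q × Q, p ∈ A ∧ p ∈ B) →
        ∃! p : Q × Q, p ∈ B ∧ p ∈ A := by
      rintro A B ⟨p, ⟨h1, h2⟩, hu⟩
      exact ⟨p, ⟨h2, h1⟩, fun q ⟨g2, g1⟩ => hu q ⟨g1, g2⟩⟩
    intro i j hij
    fin_cases i <;> fin_cases j
    · exact absurd rfl hij
    · rintro ℓ ⟨c, rfl⟩ ℓ' ⟨c', rfl⟩; exact h01 c c'
    · rintro ℓ ⟨c, rfl⟩ ℓ' ⟨c', rfl⟩; exact h02 c c'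
    · rintro ℓ ⟨c, rfl⟩ ℓ' ⟨c', rfl⟩; exact symm _ _ (h01 c' c)
    · exact absurd rfl hij
    · rintro ℓ ⟨c, rfl⟩ ℓ' ⟨c', rfl⟩; exact h12 c c'
    · rintro ℓ ⟨c, rfl⟩ ℓ' ⟨c', rfl⟩; exact symm _ _ (h02 c' c)
    · rintro ℓ ⟨c, rfl⟩ ℓ' ⟨c', rfl⟩; exact symm _ _ (h12 c' c)
    · exact absurd rfl hij
  point_line := by
    rintro ⟨x, y⟩ i
    fin_cases i
    · refine ⟨hline y, ⟨⟨y, rfl⟩, rfl⟩, ?_⟩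
      rintro ℓ ⟨⟨c, rfl⟩, hc⟩
      rw [show c = y from (hc : _ = c).symm]
    · refine ⟨vline x, ⟨⟨x, rfl⟩, rfl⟩, ?_⟩
      rintro ℓ ⟨⟨c, rfl⟩, hc⟩
      rw [show c = x from (hc : _ = c).symm]
    · refine ⟨tline (x * y), ⟨⟨x * y, rfl⟩, rfl⟩, ?_⟩
      rintro ℓ ⟨⟨c, rfl⟩, hc⟩
      rw [show c = x * y from (hc : _ = c).symm]

/-- The lines of `loopNet Q` through the origin `(1, 1)`. -/
def originLine (Q : Type*) [Loop Q] : Fin 3 → Set (Q × Q) :=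
  ![hline 1, vline 1, tline 1]

end Loop

/-- The automorphism of `M₀` given by conjugation with the Bol reflection `σ i`. -/
def conjAutM0 (Q : Type*) [Loop Q] (σ : Fin 3 → Equiv.Perm (Q × Q))
    (hnorm : ∀ i, ∀ x ∈ (Loop.loopNet Q).MZero,
      (σ i)⁻¹ * x * σ i ∈ (Loop.loopNet Q).MZero ∧
        σ i * x * (σ i)⁻¹ ∈ (Loop.loopNet Q).MZero)
    (i : Fin 3) : MulAut ↥((Loop.loopNet Q).MZero) where
  toFun x := ⟨(σ i)⁻¹ * x.1 * σ i, (hnorm i x.1 x.2).1⟩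
  invFun x := ⟨σ i * x.1 * (σ i)⁻¹, (hnorm i x.1 x.2).2⟩
  left_inv x := by
    apply Subtype.ext
    show σ i * ((σ i)⁻¹ * x.1 * σ i) * (σ i)⁻¹ = x.1
    group
  right_inv x := by
    apply Subtype.ext
    show (σ i)⁻¹ * (σ i * x.1 * (σ i)⁻¹) * σ i = x.1
    group
  map_mul' x y := by
    apply Subtype.ext
    show (σ i)⁻¹ * (x.1 * y.1) * σ i = ((σ i)⁻¹ * x.1 * σ i) * ((σ i)⁻¹ * y.1 * σ i)
    group


/-!
The Bol reflections of the loop net are explicit: with `τ_c : (x, y) ↦ (c x, y c)` and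
`σ₀, σ₁, σ₂` the reflections in the three lines through the origin, the reflection in the
transversal line `x y = c` is `τ_c σ₂`, the one in the horizontal line `y = c` is
`(σ₁ τ_c σ₁) σ₀`, and the one in the vertical line `x = c` is `(σ₀ τ_c σ₀) σ₁`. So every
element of `M` is `g s` with `g` in the group generated by the `τ_a` and their conjugates by
`σ₀, σ₁`, and `s` in the six-element group `S`; as no nontrivial element of `S` preserves
directions, `M₀` is that group.

An automorphism `α` of the loop acts on the net as `α × α`, which commutes with `S`, maps
`τ_a` to `τ_{α a}` by conjugation, and so gives an element of the centralizer; it is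
determined by its action on translations. Conversely, a centralizing `θ` preserves
`σ₂ τ_a σ₂ = τ_a⁻¹` and `(σ₀ τ_a σ₀)(σ₁ τ_a σ₁) = τ_a`. Among direction preserving
collineations, i.e. autotopisms `(x, y) ↦ (β x, γ y)`, these two identities force
`β = L_b` and `γ = R_b` with `b = β 1`, so `θ τ_a = τ_{f a}`; the relation
`τ_{a b} = (σ₀ τ_a σ₀) τ_b (σ₁ τ_a σ₁)` makes `f` an automorphism, and `θ` is conjugation
by `f × f` because both centralize `S` and agree on translations.
-/

namespace Loop

variable {Q : Type*} [Loop Q]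

instance : MulOneClass Q where
  one_mul := Loop.one_mul
  mul_one := Loop.mul_one

/-- The right inverse `a * a⁻¹ = 1`; it is two-sided in a Moufang loop. -/
noncomputable instance : Inv Q := ⟨fun a => (L a).symm 1⟩

theorem mul_inv_cancel (a : Q) : a * a⁻¹ = 1 := (L a).apply_symm_apply 1

theorem inv_one : (1 : Q)⁻¹ = 1 := by
  simpa using mul_inv_cancel (1 : Q)

theorem map_inv (α : MulAut Q) (a : Q) : α a⁻¹ = (α a)⁻¹ :=
  mul_left_cancel' (a := α a) <| by rw [← map_mul, mul_inv_cancel, map_one, mul_inv_cancel]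

end Loop

namespace IsMoufang

variable {Q : Type*} [Loop Q] (hM : IsMoufang Q)
include hM

theorem inv_mul_cancel_left (a z : Q) : a⁻¹ * (a * z) = z := by
  have h := hM a a⁻¹ z
  rw [Loop.mul_inv_cancel, one_mul] at h
  exact Loop.mul_left_cancel' h.symm

theorem inv_mul_cancel (a : Q) : a⁻¹ * a = 1 := by
  simpa using hM.inv_mul_cancel_left a 1

theorem inv_inv (a : Q) : a⁻¹⁻¹ = a :=
  Loop.mul_left_cancel' ((Loop.mul_inv_cancel a⁻¹).trans (hM.inv_mul_cancel a).symm)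

theorem mul_inv_cancel_left (a z : Q) : a * (a⁻¹ * z) = z := by
  simpa [hM.inv_inv] using hM.inv_mul_cancel_left a⁻¹ z

theorem mul_inv_cancel_right (z a : Q) : z * a * a⁻¹ = z := by
  obtain ⟨y, rfl⟩ := (Loop.mul_left_bijective a).2 z
  simpa [Loop.mul_inv_cancel] using hM a y a⁻¹

theorem inv_mul_cancel_right (z a : Q) : z * a⁻¹ * a = z := by
  simpa [hM.inv_inv] using hM.mul_inv_cancel_right z a⁻¹

theorem mul_inv_rev (a b : Q) : (a * b)⁻¹ = b⁻¹ * a⁻¹ := by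
  have h : (a * b)⁻¹ * a = b⁻¹ := by
    simpa [hM.mul_inv_cancel_right] using hM.inv_mul_cancel_left (a * b) b⁻¹
  rw [← h, hM.mul_inv_cancel_right]

theorem inv_injective : Function.Injective (fun a : Q => a⁻¹) := fun a b h => by
  simpa [hM.inv_inv] using congrArg (·⁻¹) h

theorem flexible (a b : Q) : a * b * a = a * (b * a) := by
  simpa using hM a b 1

theorem right_moufang (x y z : Q) : z * x * y * x = z * (x * (y * x)) := by
  simpa [hM.mul_inv_rev, hM.inv_inv] using (congrArg (·⁻¹) (hM x⁻¹ y⁻¹ z⁻¹)).symm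

theorem left_bol (x y z : Q) : x * (y * x) * z = x * (y * (x * z)) := by
  rw [← hM.flexible]
  exact hM x y z

theorem middle_moufang (x y z : Q) : x * y * (z * x) = x * (y * z * x) := by
  have h₁ : x * y * (z * x) = x * (y * x⁻¹ * (x * (z * x))) := by
    simpa [hM.flexible, hM.inv_mul_cancel_right] using hM x (y * x⁻¹) (z * x)
  have h₂ : y * x⁻¹ * (x * (z * x)) = y * z * x := by
    simpa [hM.inv_mul_cancel_right] using (hM.right_moufang x z (y * x⁻¹)).symm
  rw [h₁, h₂]

theorem mul_mul_inv_mul (a x y : Q) : a * (x * a) * (a⁻¹ * y) = a * (x * y) := by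
  simpa [hM.flexible, hM.mul_inv_cancel_left] using hM a x (a⁻¹ * y)

theorem mul_inv_mul_mul (a x y : Q) : x * a⁻¹ * (a * (y * a)) = x * y * a := by
  simpa [hM.inv_mul_cancel_right] using (hM.right_moufang a y (x * a⁻¹)).symm

theorem eq_mul_of_autotopism {β γ : Q → Q} (hγ : Function.Surjective γ)
    (hA : ∀ x y, β x * γ y = β (x * y) * γ 1) (h₁ : ∀ x, β (γ x⁻¹)⁻¹ = x)
    (h₂ : ∀ x, β (β x⁻¹)⁻¹ * γ 1 = β x) (h₃ : ∀ y, (γ (β y * γ 1)⁻¹)⁻¹ = γ y) :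
    (∀ x, β x = β 1 * x) ∧ ∀ y, γ y = y * β 1 := by
  have hd : ∀ y, β y * γ 1 = β 1 * γ y := fun y => by simpa using (hA 1 y).symm
  have hβ : ∀ x, β x = β 1 * x := by
    intro x
    obtain ⟨y, rfl⟩ := hγ x
    calc β (γ y) = β (γ (β y * γ 1)⁻¹)⁻¹ := by rw [h₃]
      _ = β y * γ 1 := h₁ _
      _ = β 1 * γ y := hd y
  refine ⟨hβ, fun y => Loop.mul_left_cancel' (a := β 1) ?_⟩
  have h := h₂ (y * β 1)
  rwa [hβ (y * β 1)⁻¹, hM.mul_inv_rev, hM.inv_inv, hM.mul_inv_cancel_right, hd,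
    hβ (y * β 1)] at h

end IsMoufang

theorem Subgroup.mul_mul_inv_mem_closure {G : Type*} [Group G] {s : Set G} {x g : G}
    (hs : ∀ y ∈ s, x * y * x⁻¹ ∈ Subgroup.closure s) (hg : g ∈ Subgroup.closure s) :
    x * g * x⁻¹ ∈ Subgroup.closure s :=
  (Subgroup.closure_le (K := (Subgroup.closure s).comap (MulAut.conj x).toMonoidHom)).2 hs hg

theorem Subgroup.monoidHom_ext_of_eq_closure {G M : Type*} [Group G] [Monoid M]
    {H : Subgroup G} {s : Set G} (hH : H = Subgroup.closure s) {f g : H →* M}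
    (h : ∀ x (hx : x ∈ H), x ∈ s → f ⟨x, hx⟩ = g ⟨x, hx⟩) : f = g := by
  subst hH
  exact MonoidHom.eq_of_eqOn_dense Subgroup.closure_closure_coe_preimage
    fun x hx => h x.1 x.2 hx

theorem MulAut.apply_apply_of_mem_centralizer {G : Type*} [Mul G] {S : Set (MulAut G)}
    {φ ψ : MulAut G} (hφ : φ ∈ Subgroup.centralizer S) (hψ : ψ ∈ S) (x : G) :
    ψ (φ x) = φ (ψ x) :=
  DFunLike.congr_fun (Subgroup.mem_centralizer_iff.1 hφ ψ hψ) x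

namespace ThreeNet

variable {P : Type*} {N : ThreeNet P}

theorem IsColl.mul {f g : Equiv.Perm P} (hf : N.IsColl f) (hg : N.IsColl g) :
    N.IsColl (f * g) := by
  refine ⟨fun ℓ hℓ => ?_, fun ℓ hℓ => ?_⟩
  · rw [Equiv.Perm.coe_mul, Set.image_comp]
    exact hf.1 _ (hg.1 ℓ hℓ)
  · rw [_root_.mul_inv_rev, Equiv.Perm.coe_mul, Set.image_comp]
    exact hg.2 _ (hf.2 ℓ hℓ)

theorem IsBolRefl.mem_MGroup {ℓ : Set P} {f : Equiv.Perm P} (hf : N.IsBolRefl ℓ f) :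
    f ∈ N.MGroup :=
  Subgroup.subset_closure ⟨ℓ, hf⟩

theorem isColl_of_mem_dirPres {f : Equiv.Perm P} (hf : f ∈ N.dirPres) : N.IsColl f :=
  ⟨fun _ ⟨i, hℓ⟩ => ⟨i, (hf i _ hℓ).1⟩, fun _ ⟨i, hℓ⟩ => ⟨i, (hf i _ hℓ).2⟩⟩

end ThreeNet

namespace MoufangNet

open Loop (loopNet hline vline tline originLine)

variable {Q : Type*}

theorem image_prodCongr_hline {β γ : Equiv.Perm Q} (c : Q) :
    Equiv.prodCongr β γ '' hline c = hline (γ c) := by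
  ext ⟨u, v⟩
  rw [Equiv.image_eq_preimage_symm]
  simp [hline, Equiv.symm_apply_eq]

theorem image_prodCongr_vline {β γ : Equiv.Perm Q} (c : Q) :
    Equiv.prodCongr β γ '' vline c = vline (β c) := by
  ext ⟨u, v⟩
  rw [Equiv.image_eq_preimage_symm]
  simp [vline, Equiv.symm_apply_eq]

variable [Loop Q]

theorem hline_mem (c : Q) : hline c ∈ (loopNet Q).lines 0 := ⟨c, rfl⟩
theorem vline_mem (c : Q) : vline c ∈ (loopNet Q).lines 1 := ⟨c, rfl⟩
theorem tline_mem (c : Q) : tline c ∈ (loopNet Q).lines 2 := ⟨c, rfl⟩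

theorem originLine_mem (i : Fin 3) : originLine Q i ∈ (loopNet Q).lines i := by
  fin_cases i
  exacts [hline_mem 1, vline_mem 1, tline_mem 1]

section Autotopism

variable {β γ δ : Equiv.Perm Q}

theorem image_prodCongr_tline (h : ∀ x y, β x * γ y = δ (x * y)) (c : Q) :
    Equiv.prodCongr β γ '' tline c = tline (δ c) := by
  ext ⟨u, v⟩
  rw [Equiv.image_eq_preimage_symm]
  simp only [tline, Set.mem_preimage, Set.mem_setOf_eq, Equiv.prodCongr_symm,
    Equiv.prodCongr_apply, Prod.map]
  rw [← δ.injective.eq_iff, ← h, Equiv.apply_symm_apply, Equiv.apply_symm_apply]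

theorem image_prodCongr_mem_lines (h : ∀ x y, β x * γ y = δ (x * y)) :
    ∀ i, ∀ ℓ ∈ (loopNet Q).lines i, Equiv.prodCongr β γ '' ℓ ∈ (loopNet Q).lines i := by
  intro i
  fin_cases i <;> rintro _ ⟨c, rfl⟩
  · exact image_prodCongr_hline c ▸ hline_mem _
  · exact image_prodCongr_vline c ▸ vline_mem _
  · exact image_prodCongr_tline h c ▸ tline_mem _

theorem prodCongr_mem_dirPres (h : ∀ x y, β x * γ y = δ (x * y)) :
    Equiv.prodCongr β γ ∈ (loopNet Q).dirPres := by
  have h' : ∀ x y, β.symm x * γ.symm y = δ.symm (x * y) := fun x y => by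
    rw [Equiv.eq_symm_apply, ← h, Equiv.apply_symm_apply, Equiv.apply_symm_apply]
  exact fun i ℓ hℓ => ⟨image_prodCongr_mem_lines h i ℓ hℓ,
    image_prodCongr_mem_lines h' i ℓ hℓ⟩

end Autotopism

section DirPres

variable {f : Equiv.Perm (Q × Q)} (hf : f ∈ (loopNet Q).dirPres)
include hf

theorem fst_apply_eq_of_mem_dirPres (x y y' : Q) : (f (x, y)).1 = (f (x, y')).1 := by
  obtain ⟨c, hc⟩ := (hf 1 (vline x) (vline_mem x)).1
  have h₁ : f (x, y) ∈ f '' vline x := Set.mem_image_of_mem _ rfl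
  have h₂ : f (x, y') ∈ f '' vline x := Set.mem_image_of_mem _ rfl
  rw [hc] at h₁ h₂
  exact h₁.trans h₂.symm

theorem snd_apply_eq_of_mem_dirPres (x x' y : Q) : (f (x, y)).2 = (f (x', y)).2 := by
  obtain ⟨c, hc⟩ := (hf 0 (hline y) (hline_mem y)).1
  have h₁ : f (x, y) ∈ f '' hline y := Set.mem_image_of_mem _ rfl
  have h₂ : f (x', y) ∈ f '' hline y := Set.mem_image_of_mem _ rfl
  rw [hc] at h₁ h₂
  exact h₁.trans h₂.symm

theorem exists_prodMap_of_mem_dirPres : ∃ β γ : Q → Q,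
    (∀ p, f p = (β p.1, γ p.2)) ∧ ∀ x y, β x * γ y = β (x * y) * γ 1 := by
  refine ⟨fun x => (f (x, 1)).1, fun y => (f (1, y)).2, fun p => ?_, fun x y => ?_⟩
  · show f p = ((f (p.1, 1)).1, (f (1, p.2)).2)
    rw [fst_apply_eq_of_mem_dirPres hf p.1 1 p.2, snd_apply_eq_of_mem_dirPres hf 1 p.1 p.2]
  · obtain ⟨c, hc⟩ := (hf 2 (tline (x * y)) (tline_mem _)).1
    have h₁ : f (x, y) ∈ f '' tline (x * y) := Set.mem_image_of_mem _ rfl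
    have h₂ : f (x * y, 1) ∈ f '' tline (x * y) := Set.mem_image_of_mem _ (mul_one _)
    rw [hc] at h₁ h₂
    show (f (x, 1)).1 * (f (1, y)).2 = (f (x * y, 1)).1 * (f (1, 1)).2
    rw [fst_apply_eq_of_mem_dirPres hf x 1 y, ← snd_apply_eq_of_mem_dirPres hf x 1 y,
      fst_apply_eq_of_mem_dirPres hf (x * y) 1 1, ← snd_apply_eq_of_mem_dirPres hf (x * y) 1 1]
    exact h₁.trans h₂.symm

end DirPres

noncomputable def transl (a : Q) : Equiv.Perm (Q × Q) := Equiv.prodCongr (Loop.L a) (Loop.R a)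

@[simp] theorem transl_apply (a : Q) (p : Q × Q) : transl a p = (a * p.1, p.2 * a) := rfl

theorem transl_one : transl (1 : Q) = 1 := by
  ext ⟨x, y⟩ <;> simp

theorem transl_injective : Function.Injective (transl : Q → Equiv.Perm (Q × Q)) :=
  fun a b h => by simpa using congrArg (fun f => (f (1, 1)).1) h

def autColl : MulAut Q →* Equiv.Perm (Q × Q) where
  toFun α := Equiv.prodCongr α.toEquiv α.toEquiv
  map_one' := rfl
  map_mul' _ _ := rfl

@[simp] theorem autColl_apply (α : MulAut Q) (p : Q × Q) : autColl α p = (α p.1, α p.2) := rfl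

@[simp] theorem autColl_symm_apply (α : MulAut Q) (p : Q × Q) :
    (autColl α).symm p = (α.symm p.1, α.symm p.2) := rfl

theorem autColl_mul_transl_mul_inv (α : MulAut Q) (a : Q) :
    autColl α * transl a * (autColl α)⁻¹ = transl (α a) := by
  ext ⟨x, y⟩ <;> simp

variable (hM : IsMoufang Q)
include hM

theorem reflH_involutive : Function.Involutive (fun p : Q × Q => (p.1 * p.2, p.2⁻¹)) :=
  fun p => by simp [hM.mul_inv_cancel_right, hM.inv_inv]

theorem reflV_involutive : Function.Involutive (fun p : Q × Q => (p.1⁻¹, p.1 * p.2)) :=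
  fun p => by simp [hM.inv_mul_cancel_left, hM.inv_inv]

theorem reflT_involutive : Function.Involutive (fun p : Q × Q => (p.2⁻¹, p.1⁻¹)) :=
  fun p => by simp [hM.inv_inv]

/-- `reflH`, `reflV`, `reflT` are the Bol reflections `σ₀, σ₁, σ₂` in the horizontal, vertical
and transversal line through the origin. -/
noncomputable def reflH : Equiv.Perm (Q × Q) := (reflH_involutive hM).toPerm _
noncomputable def reflV : Equiv.Perm (Q × Q) := (reflV_involutive hM).toPerm _
noncomputable def reflT : Equiv.Perm (Q × Q) := (reflT_involutive hM).toPerm _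

@[simp] theorem reflH_apply (p : Q × Q) : reflH hM p = (p.1 * p.2, p.2⁻¹) := rfl
@[simp] theorem reflV_apply (p : Q × Q) : reflV hM p = (p.1⁻¹, p.1 * p.2) := rfl
@[simp] theorem reflT_apply (p : Q × Q) : reflT hM p = (p.2⁻¹, p.1⁻¹) := rfl

noncomputable def originRefl : Fin 3 → Equiv.Perm (Q × Q) := ![reflH hM, reflV hM, reflT hM]

theorem originRefl_inv (i : Fin 3) : (originRefl hM i)⁻¹ = originRefl hM i := by
  fin_cases i <;> rfl

theorem reflH_mul_self : reflH hM * reflH hM = 1 := Equiv.ext (reflH_involutive hM)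
theorem reflV_mul_self : reflV hM * reflV hM = 1 := Equiv.ext (reflV_involutive hM)
theorem reflT_mul_self : reflT hM * reflT hM = 1 := Equiv.ext (reflT_involutive hM)

theorem originRefl_mul_self (i : Fin 3) : originRefl hM i * originRefl hM i = 1 := by
  fin_cases i
  exacts [reflH_mul_self hM, reflV_mul_self hM, reflT_mul_self hM]

theorem originRefl_mul_originRefl_mul (i : Fin 3) (f : Equiv.Perm (Q × Q)) :
    originRefl hM i * (originRefl hM i * f) = f := by
  rw [← mul_assoc, originRefl_mul_self, one_mul]

theorem reflH_mul_reflV_mul_reflH : reflH hM * reflV hM * reflH hM = reflT hM := by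
  ext ⟨x, y⟩ <;> simp [hM.mul_inv_cancel_right, hM.inv_mul_cancel_right, hM.mul_inv_rev]

theorem reflV_mul_reflH_mul_reflV : reflV hM * reflH hM * reflV hM = reflT hM := by
  ext ⟨x, y⟩ <;> simp [hM.inv_mul_cancel_left, hM.mul_inv_cancel_left, hM.mul_inv_rev]

theorem transl_inv (a : Q) : (transl a)⁻¹ = transl a⁻¹ := by
  rw [inv_eq_iff_mul_eq_one]
  ext ⟨x, y⟩ <;> simp [hM.mul_inv_cancel_left, hM.inv_mul_cancel_right]

noncomputable def hTransl (a : Q) : Equiv.Perm (Q × Q) := reflH hM * transl a * reflH hM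
noncomputable def vTransl (a : Q) : Equiv.Perm (Q × Q) := reflV hM * transl a * reflV hM

@[simp] theorem hTransl_apply (a : Q) (p : Q × Q) :
    hTransl hM a p = (a * (p.1 * a), a⁻¹ * p.2) := by
  simp [hTransl, hM.middle_moufang, hM.mul_inv_cancel_right, hM.mul_inv_rev, hM.inv_inv]

@[simp] theorem vTransl_apply (a : Q) (p : Q × Q) :
    vTransl hM a p = (p.1 * a⁻¹, a * (p.2 * a)) := by
  simp [vTransl, hM.middle_moufang, hM.inv_mul_cancel_left, hM.mul_inv_rev, hM.inv_inv]

theorem reflT_mul_transl_mul_reflT (a : Q) : reflT hM * transl a * reflT hM = transl a⁻¹ := by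
  ext ⟨x, y⟩ <;> simp [hM.mul_inv_rev, hM.inv_inv]

theorem hTransl_mul_vTransl (a : Q) : hTransl hM a * vTransl hM a = transl a := by
  ext ⟨x, y⟩ <;> simp [hM.inv_mul_cancel_right, hM.inv_mul_cancel_left]

theorem hTransl_mul_transl_mul_vTransl (a b : Q) :
    hTransl hM a * transl b * vTransl hM a = transl (a * b) := by
  ext ⟨x, y⟩
  · simp [← hM.middle_moufang, hM.inv_mul_cancel_right, hM.left_bol]
  · simp [hM.left_bol, hM.inv_mul_cancel_left]

theorem reflH_mul_hTransl_mul_reflH (a : Q) : reflH hM * hTransl hM a * reflH hM = transl a := by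
  have h := reflH_mul_self hM
  rw [hTransl, ← mul_assoc, ← mul_assoc, h, one_mul, mul_assoc, h, mul_one]

theorem reflV_mul_vTransl_mul_reflV (a : Q) : reflV hM * vTransl hM a * reflV hM = transl a := by
  have h := reflV_mul_self hM
  rw [vTransl, ← mul_assoc, ← mul_assoc, h, one_mul, mul_assoc, h, mul_one]

theorem reflH_mul_vTransl_mul_reflH (a : Q) :
    reflH hM * vTransl hM a * reflH hM = vTransl hM a⁻¹ := by
  ext ⟨x, y⟩ <;> simp [hM.mul_inv_mul_mul, hM.mul_inv_cancel_right, hM.mul_inv_rev, hM.inv_inv,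
    hM.flexible]

theorem reflV_mul_hTransl_mul_reflV (a : Q) :
    reflV hM * hTransl hM a * reflV hM = hTransl hM a⁻¹ := by
  ext ⟨x, y⟩ <;> simp [hM.mul_mul_inv_mul, hM.inv_mul_cancel_left, hM.mul_inv_rev, hM.inv_inv,
    hM.flexible]

theorem transl_mem_dirPres (a : Q) : transl a ∈ (loopNet Q).dirPres :=
  prodCongr_mem_dirPres (δ := Loop.L a * Loop.R a) fun x y => hM.middle_moufang a x y

theorem hTransl_mem_dirPres (a : Q) : hTransl hM a ∈ (loopNet Q).dirPres := by
  have h : hTransl hM a = Equiv.prodCongr (Loop.L a * Loop.R a) (Loop.L a⁻¹) := by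
    ext ⟨x, y⟩ <;> simp
  exact h ▸ prodCongr_mem_dirPres (δ := Loop.L a) fun x y => hM.mul_mul_inv_mul a x y

theorem vTransl_mem_dirPres (a : Q) : vTransl hM a ∈ (loopNet Q).dirPres := by
  have h : vTransl hM a = Equiv.prodCongr (Loop.R a⁻¹) (Loop.L a * Loop.R a) := by
    ext ⟨x, y⟩ <;> simp
  exact h ▸ prodCongr_mem_dirPres (δ := Loop.R a) fun x y => hM.mul_inv_mul_mul a x y

theorem autColl_mul_hTransl_mul_inv (α : MulAut Q) (a : Q) :
    autColl α * hTransl hM a * (autColl α)⁻¹ = hTransl hM (α a) := by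
  ext ⟨x, y⟩ <;> simp [Loop.map_inv]

theorem autColl_mul_vTransl_mul_inv (α : MulAut Q) (a : Q) :
    autColl α * vTransl hM a * (autColl α)⁻¹ = vTransl hM (α a) := by
  ext ⟨x, y⟩ <;> simp [Loop.map_inv]

theorem commute_autColl_originRefl (α : MulAut Q) (i : Fin 3) :
    Commute (autColl α) (originRefl hM i) := by
  fin_cases i <;> ext ⟨x, y⟩ <;> simp [originRefl, Loop.map_inv]

theorem eq_vTransl_mul_reflH_of_bolSpec {c : Q} {f : Equiv.Perm (Q × Q)}
    (hf : (loopNet Q).BolSpec 0 (hline c) f) : f = vTransl hM c * reflH hM := by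
  ext1 p
  -- `p` lies on `x = p.1` and on `x y = p.1 p.2`, which meet the axis in `(p.1, c)` and
  -- `(p.1 p.2 c⁻¹, c)`; so `f p` lies on `x = p.1 p.2 c⁻¹` and on `x y = p.1 c`.
  obtain ⟨h₁, h₂⟩ := hf 1 2 (by decide) (by decide) (by decide) p
    (vline p.1) (vline_mem _) (tline (p.1 * p.2)) (tline_mem _) rfl rfl
    (p.1, c) rfl rfl (p.1 * p.2 * c⁻¹, c) (hM.inv_mul_cancel_right _ _) rfl
    (vline (p.1 * p.2 * c⁻¹)) (vline_mem _) (tline (p.1 * c)) (tline_mem _) rfl rfl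
  have h₃ : p.1 * p.2 * c⁻¹ * (c * (p.2⁻¹ * c)) = p.1 * c := by
    rw [hM.mul_inv_mul_mul, hM.mul_inv_cancel_right]
  simp only [vline, tline, Set.mem_setOf_eq] at h₁ h₂
  rw [Equiv.Perm.mul_apply, reflH_apply, vTransl_apply]
  refine Prod.ext h₁ (Loop.mul_left_cancel' (a := (f p).1) ?_)
  rw [h₂, h₁, h₃]

theorem eq_hTransl_mul_reflV_of_bolSpec {c : Q} {f : Equiv.Perm (Q × Q)}
    (hf : (loopNet Q).BolSpec 1 (vline c) f) : f = hTransl hM c * reflV hM := by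
  ext1 p
  obtain ⟨h₁, h₂⟩ := hf 0 2 (by decide) (by decide) (by decide) p
    (hline p.2) (hline_mem _) (tline (p.1 * p.2)) (tline_mem _) rfl rfl
    (c, p.2) rfl rfl (c, c⁻¹ * (p.1 * p.2)) (hM.mul_inv_cancel_left _ _) rfl
    (hline (c⁻¹ * (p.1 * p.2))) (hline_mem _) (tline (c * p.2)) (tline_mem _) rfl rfl
  have h₃ : c * (p.1⁻¹ * c) * (c⁻¹ * (p.1 * p.2)) = c * p.2 := by
    rw [hM.mul_mul_inv_mul, hM.inv_mul_cancel_left]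
  simp only [hline, tline, Set.mem_setOf_eq] at h₁ h₂
  rw [Equiv.Perm.mul_apply, reflV_apply, hTransl_apply]
  refine Prod.ext (Loop.mul_right_cancel' (a := (f p).2) ?_) h₁
  rw [h₂, h₁, h₃]

theorem eq_transl_mul_reflT_of_bolSpec {c : Q} {f : Equiv.Perm (Q × Q)}
    (hf : (loopNet Q).BolSpec 2 (tline c) f) : f = transl c * reflT hM := by
  ext1 p
  obtain ⟨h₁, h₂⟩ := hf 0 1 (by decide) (by decide) (by decide) p
    (hline p.2) (hline_mem _) (vline p.1) (vline_mem _) rfl rfl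
    (c * p.2⁻¹, p.2) rfl (hM.inv_mul_cancel_right _ _) (p.1, p.1⁻¹ * c) rfl
    (hM.mul_inv_cancel_left _ _)
    (hline (p.1⁻¹ * c)) (hline_mem _) (vline (c * p.2⁻¹)) (vline_mem _) rfl rfl
  exact Prod.ext h₂ h₁

theorem eq_originRefl_of_bolSpec (i : Fin 3) {f : Equiv.Perm (Q × Q)}
    (hf : (loopNet Q).BolSpec i (originLine Q i) f) : f = originRefl hM i := by
  fin_cases i
  · simpa [originRefl, vTransl, transl_one, reflV_mul_self] using
      eq_vTransl_mul_reflH_of_bolSpec hM hf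
  · simpa [originRefl, hTransl, transl_one, reflH_mul_self] using
      eq_hTransl_mul_reflV_of_bolSpec hM hf
  · simpa [originRefl, transl_one] using eq_transl_mul_reflT_of_bolSpec hM hf

theorem bolSpec_transl_mul_reflT (c : Q) :
    (loopNet Q).BolSpec 2 (tline c) ⇑(transl c * reflT hM) := by
  have key : ∀ p : Q × Q, ∀ a₀ ∈ (loopNet Q).lines 0, ∀ a₁ ∈ (loopNet Q).lines 1,
      p ∈ a₀ → p ∈ a₁ → ∀ q₀ ∈ a₀, q₀ ∈ tline c → ∀ q₁ ∈ a₁, q₁ ∈ tline c →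
      ∀ b₀ ∈ (loopNet Q).lines 0, ∀ b₁ ∈ (loopNet Q).lines 1, q₁ ∈ b₀ → q₀ ∈ b₁ →
      (transl c * reflT hM) p ∈ b₀ ∧ (transl c * reflT hM) p ∈ b₁ := by
    rintro p _ ⟨d₀, rfl⟩ _ ⟨d₁, rfl⟩ hp₀ hp₁ q₀ hq₀ hq₀' q₁ hq₁ hq₁' _ ⟨e₀, rfl⟩ _ ⟨e₁, rfl⟩
      he₀ he₁
    simp only [hline, vline, tline, Set.mem_setOf_eq] at hp₀ hp₁ hq₀ hq₀' hq₁ hq₁' he₀ he₁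
    subst hp₀ hp₁ he₀ he₁
    constructor
    · rw [← hq₁', hq₁]
      exact hM.inv_mul_cancel_left _ _
    · rw [← hq₀', hq₀]
      exact hM.mul_inv_cancel_right _ _
  intro j k hj hk hjk p aj haj ak hak hpj hpk qj hqj hqj' qk hqk hqk' bj hbj bk hbk hqkbj hqjbk
  fin_cases j <;> fin_cases k <;> first
    | exact absurd rfl hj | exact absurd rfl hk | exact absurd rfl hjk
    | exact key p aj haj ak hak hpj hpk qj hqj hqj' qk hqk hqk' bj hbj bk hbk hqkbj hqjbk
    | exact (key p ak hak aj haj hpk hpj qk hqk hqk' qj hqj hqj' bk hbk bj hbj hqjbk hqkbj).symm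

noncomputable def translGroup : Subgroup (Equiv.Perm (Q × Q)) :=
  Subgroup.closure (Set.range transl ∪ Set.range (hTransl hM) ∪ Set.range (vTransl hM))

theorem transl_mem_translGroup (a : Q) : transl a ∈ translGroup hM :=
  Subgroup.subset_closure (.inl (.inl ⟨a, rfl⟩))
theorem hTransl_mem_translGroup (a : Q) : hTransl hM a ∈ translGroup hM :=
  Subgroup.subset_closure (.inl (.inr ⟨a, rfl⟩))
theorem vTransl_mem_translGroup (a : Q) : vTransl hM a ∈ translGroup hM :=
  Subgroup.subset_closure (.inr ⟨a, rfl⟩)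

theorem conj_reflH_mem_translGroup {g : Equiv.Perm (Q × Q)} (hg : g ∈ translGroup hM) :
    reflH hM * g * reflH hM ∈ translGroup hM := by
  refine Subgroup.mul_mul_inv_mem_closure (x := reflH hM) ?_ hg
  rintro _ ((⟨a, rfl⟩ | ⟨a, rfl⟩) | ⟨a, rfl⟩)
  · exact hTransl_mem_translGroup hM a
  · exact reflH_mul_hTransl_mul_reflH hM a ▸ transl_mem_translGroup hM a
  · exact reflH_mul_vTransl_mul_reflH hM a ▸ vTransl_mem_translGroup hM a⁻¹

theorem conj_reflV_mem_translGroup {g : Equiv.Perm (Q × Q)} (hg : g ∈ translGroup hM) :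
    reflV hM * g * reflV hM ∈ translGroup hM := by
  refine Subgroup.mul_mul_inv_mem_closure (x := reflV hM) ?_ hg
  rintro _ ((⟨a, rfl⟩ | ⟨a, rfl⟩) | ⟨a, rfl⟩)
  · exact vTransl_mem_translGroup hM a
  · exact reflV_mul_hTransl_mul_reflV hM a ▸ hTransl_mem_translGroup hM a⁻¹
  · exact reflV_mul_vTransl_mul_reflV hM a ▸ transl_mem_translGroup hM a

theorem conj_originRefl_mem_translGroup (i : Fin 3) {g : Equiv.Perm (Q × Q)}
    (hg : g ∈ translGroup hM) : originRefl hM i * g * originRefl hM i ∈ translGroup hM := by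
  fin_cases i
  · exact conj_reflH_mem_translGroup hM hg
  · exact conj_reflV_mem_translGroup hM hg
  · have h := conj_reflH_mem_translGroup hM (conj_reflV_mem_translGroup hM
      (conj_reflH_mem_translGroup hM hg))
    change reflT hM * g * reflT hM ∈ _
    rwa [← reflH_mul_reflV_mul_reflH hM, show ∀ r s : Equiv.Perm (Q × Q),
      r * s * r * g * (r * s * r) = r * (s * (r * g * r) * s) * r by intros; group]

/-- The group `S ≅ S₃` generated by the origin reflections. -/
noncomputable def reflWords : Set (Equiv.Perm (Q × Q)) :=
  {1, reflH hM, reflV hM, reflH hM * reflV hM, reflV hM * reflH hM, reflT hM}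

theorem originRefl_mul_mem_reflWords (i : Fin 3) {s : Equiv.Perm (Q × Q)}
    (hs : s ∈ reflWords hM) : originRefl hM i * s ∈ reflWords hM := by
  have hH := reflH_mul_self hM
  have hH' : ∀ s, reflH hM * (reflH hM * s) = s := fun s => by rw [← mul_assoc, hH, one_mul]
  have hV' : ∀ s, reflV hM * (reflV hM * s) = s := fun s => by
    rw [← mul_assoc, reflV_mul_self, one_mul]
  have braid : ∀ s,
      reflV hM * (reflH hM * (reflV hM * s)) = reflH hM * (reflV hM * (reflH hM * s)) :=
    fun s => by simp only [← mul_assoc, reflH_mul_reflV_mul_reflH, reflV_mul_reflH_mul_reflV]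
  have braid' : reflV hM * (reflH hM * reflV hM) = reflH hM * (reflV hM * reflH hM) := by
    simpa using braid 1
  fin_cases i <;> rcases hs with rfl | rfl | rfl | rfl | rfl | rfl <;>
    simp [reflWords, originRefl, ← reflH_mul_reflV_mul_reflH hM, mul_assoc, hH, hH', hV',
      braid, braid', reflV_mul_self]

theorem exists_eq_mul_originRefl_of_isBolRefl {ℓ : Set (Q × Q)} {f : Equiv.Perm (Q × Q)}
    (hf : (loopNet Q).IsBolRefl ℓ f) : ∃ i, ∃ g ∈ translGroup hM, f = g * originRefl hM i := by
  obtain ⟨⟨i, hℓ, hspec⟩, -⟩ := hf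
  fin_cases i <;> obtain ⟨c, rfl⟩ := hℓ
  · exact ⟨0, _, vTransl_mem_translGroup hM c, eq_vTransl_mul_reflH_of_bolSpec hM hspec⟩
  · exact ⟨1, _, hTransl_mem_translGroup hM c, eq_hTransl_mul_reflV_of_bolSpec hM hspec⟩
  · exact ⟨2, _, transl_mem_translGroup hM c, eq_transl_mul_reflT_of_bolSpec hM hspec⟩

theorem exists_eq_mul_of_mem_MGroup {w : Equiv.Perm (Q × Q)} (hw : w ∈ (loopNet Q).MGroup) :
    ∃ g ∈ translGroup hM, ∃ s ∈ reflWords hM, w = g * s := by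
  have key : ∀ i, ∀ g ∈ translGroup hM, ∀ s ∈ reflWords hM,
      ∃ g' ∈ translGroup hM, ∃ s' ∈ reflWords hM, originRefl hM i * (g * s) = g' * s' :=
    fun i g hg s hs => ⟨_, conj_originRefl_mem_translGroup hM i hg, _,
      originRefl_mul_mem_reflWords hM i hs, by
        simp only [mul_assoc, originRefl_mul_originRefl_mul]⟩
  induction hw using Subgroup.closure_induction_left with
  | one => exact ⟨1, one_mem _, 1, .inl rfl, (one_mul 1).symm⟩
  | mul_left f hf w _ ih =>
    obtain ⟨ℓ, hf⟩ := hf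
    obtain ⟨i, g', hg', rfl⟩ := exists_eq_mul_originRefl_of_isBolRefl hM hf
    obtain ⟨g, hg, s, hs, rfl⟩ := ih
    obtain ⟨g'', hg'', s', hs', h⟩ := key i g hg s hs
    exact ⟨g' * g'', mul_mem hg' hg'', s', hs', by rw [mul_assoc, h, mul_assoc]⟩
  | inv_mul_cancel f hf w _ ih =>
    obtain ⟨ℓ, hf⟩ := hf
    obtain ⟨i, g', hg', rfl⟩ := exists_eq_mul_originRefl_of_isBolRefl hM hf
    obtain ⟨g, hg, s, hs, rfl⟩ := ih
    obtain ⟨g'', hg'', s', hs', h⟩ := key i (g'⁻¹ * g) (mul_mem (inv_mem hg') hg) s hs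
    refine ⟨g'', hg'', s', hs', ?_⟩
    rw [← h, _root_.mul_inv_rev, originRefl_inv]
    group

theorem eq_one_of_mem_reflWords_of_mem_dirPres {s : Equiv.Perm (Q × Q)} (hs : s ∈ reflWords hM)
    (hd : s ∈ (loopNet Q).dirPres) : s = 1 := by
  rcases subsingleton_or_nontrivial Q with _ | _
  · exact Subsingleton.elim _ _
  obtain ⟨a, ha⟩ := exists_ne (1 : Q)
  have ha' : a⁻¹ ≠ 1 := fun h => ha (hM.inv_injective (h.trans Loop.inv_one.symm))
  -- `s` keeps `(1, 1), (1, a)` on a vertical and `(1, 1), (a, 1)` on a horizontal line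
  have h₁ := fst_apply_eq_of_mem_dirPres hd 1 1 a
  have h₂ := snd_apply_eq_of_mem_dirPres hd 1 a 1
  rcases hs with rfl | rfl | rfl | rfl | rfl | rfl
  · rfl
  · exact absurd (by simpa using h₁.symm) ha
  · exact absurd (by simpa using h₂.symm) ha
  · exact absurd (by simpa [Loop.inv_one] using h₂.symm) ha'
  · exact absurd (by simpa [Loop.inv_one] using h₁.symm) ha'
  · exact absurd (by simpa [Loop.inv_one] using h₂.symm) ha'

theorem MZero_le_translGroup : (loopNet Q).MZero ≤ translGroup hM := by
  rintro w ⟨hw, hd⟩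
  obtain ⟨g, hg, s, hs, rfl⟩ := exists_eq_mul_of_mem_MGroup hM hw
  have hgd : g ∈ (loopNet Q).dirPres := by
    refine (Subgroup.closure_le _).2 ?_ hg
    rintro _ ((⟨a, rfl⟩ | ⟨a, rfl⟩) | ⟨a, rfl⟩)
    exacts [transl_mem_dirPres hM a, hTransl_mem_dirPres hM a, vTransl_mem_dirPres hM a]
  have hsd : s ∈ (loopNet Q).dirPres := by
    simpa using mul_mem (inv_mem hgd) hd
  rwa [eq_one_of_mem_reflWords_of_mem_dirPres hM hs hsd, mul_one]

theorem exists_eq_transl_of_conj {G : Equiv.Perm (Q × Q)} (hG : G ∈ (loopNet Q).dirPres)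
    (h₂ : reflT hM * G * reflT hM = G⁻¹)
    (h₀₁ : reflH hM * G * reflH hM * (reflV hM * G * reflV hM) = G) :
    ∃ b, G = transl b := by
  obtain ⟨β, γ, hG', hA⟩ := exists_prodMap_of_mem_dirPres hG
  have hinv : ∀ p, G.symm p = ((γ p.1⁻¹)⁻¹, (β p.2⁻¹)⁻¹) := fun p => by
    rw [← Equiv.Perm.inv_def, ← h₂]
    simp [hG']
  have hγ : Function.Surjective γ := fun w => by
    obtain ⟨p, hp⟩ := G.surjective (1, w)
    exact ⟨p.2, by simpa [hG'] using congrArg Prod.snd hp⟩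
  have h₁ : ∀ x, β (γ x⁻¹)⁻¹ = x := fun x => by
    simpa [hinv, hG'] using congrArg Prod.fst (G.apply_symm_apply (x, 1))
  have hK : ∀ x y, β (β x⁻¹)⁻¹ * γ 1 = β x ∧ (γ (β y * γ 1)⁻¹)⁻¹ = γ y := fun x y => by
    have h := congrArg (· (x, y)) h₀₁
    simp only [Equiv.Perm.mul_apply, reflH_apply, reflV_apply, hG'] at h
    rw [hA x⁻¹, hM.inv_mul_cancel_left, hA, hM.mul_inv_cancel_right] at h
    exact Prod.ext_iff.1 h
  obtain ⟨hβ, hγ'⟩ :=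
    hM.eq_mul_of_autotopism hγ hA h₁ (fun x => (hK x x).1) (fun y => (hK y y).2)
  exact ⟨β 1, Equiv.ext fun p => by rw [hG', hβ, hγ']; rfl⟩

section Centralizer

variable (hσ : ∀ i, (loopNet Q).IsBolRefl (originLine Q i) (originRefl hM i))
include hσ

theorem transl_mem_MGroup (a : Q) : transl a ∈ (loopNet Q).MGroup := by
  have hrefl : (loopNet Q).IsBolRefl (tline a) (transl a * reflT hM) :=
    ⟨⟨2, tline_mem a, bolSpec_transl_mul_reflT hM a⟩,
      (ThreeNet.isColl_of_mem_dirPres (transl_mem_dirPres hM a)).mul (hσ 2).2⟩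
  have h := mul_mem hrefl.mem_MGroup (hσ 2).mem_MGroup
  rwa [mul_assoc, show originRefl hM 2 = reflT hM from rfl, reflT_mul_self, mul_one] at h

theorem translGroup_le_MZero : translGroup hM ≤ (loopNet Q).MZero := by
  have hT := transl_mem_MGroup hM hσ
  have hH := (hσ 0).mem_MGroup
  have hV := (hσ 1).mem_MGroup
  rw [translGroup, Subgroup.closure_le]
  rintro _ ((⟨a, rfl⟩ | ⟨a, rfl⟩) | ⟨a, rfl⟩)
  · exact Subgroup.mem_inf.2 ⟨hT a, transl_mem_dirPres hM a⟩
  · exact Subgroup.mem_inf.2 ⟨mul_mem (mul_mem hH (hT a)) hH, hTransl_mem_dirPres hM a⟩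
  · exact Subgroup.mem_inf.2 ⟨mul_mem (mul_mem hV (hT a)) hV, vTransl_mem_dirPres hM a⟩

theorem MZero_eq_translGroup : (loopNet Q).MZero = translGroup hM :=
  le_antisymm (MZero_le_translGroup hM) (translGroup_le_MZero hM hσ)

theorem autColl_range_le_normalizer :
    autColl.range ≤ Subgroup.normalizer ((loopNet Q).MZero : Set (Equiv.Perm (Q × Q))) := by
  rw [MZero_eq_translGroup hM hσ, translGroup, Subgroup.le_normalizer_closure_iff]
  rintro _ ⟨α, rfl⟩ _ ((⟨a, rfl⟩ | ⟨a, rfl⟩) | ⟨a, rfl⟩)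
  · exact autColl_mul_transl_mul_inv α a ▸ transl_mem_translGroup hM _
  · exact autColl_mul_hTransl_mul_inv hM α a ▸ hTransl_mem_translGroup hM _
  · exact autColl_mul_vTransl_mul_inv hM α a ▸ vTransl_mem_translGroup hM _

noncomputable def conjAutColl : MulAut Q →* MulAut (loopNet Q).MZero :=
  (loopNet Q).MZero.normalizerMonoidHom.comp
    (autColl.codRestrict _ fun α => autColl_range_le_normalizer hM hσ ⟨α, rfl⟩)

noncomputable def translMZero (a : Q) : (loopNet Q).MZero :=
  ⟨transl a, translGroup_le_MZero hM hσ (transl_mem_translGroup hM a)⟩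

theorem translMZero_injective : Function.Injective (translMZero hM hσ) :=
  fun _ _ h => transl_injective (congrArg Subtype.val h)

variable (hnorm : ∀ i, ∀ x ∈ (loopNet Q).MZero,
  (originRefl hM i)⁻¹ * x * originRefl hM i ∈ (loopNet Q).MZero ∧
    originRefl hM i * x * (originRefl hM i)⁻¹ ∈ (loopNet Q).MZero)

local notation "𝒞" => Subgroup.centralizer (Set.range (conjAutM0 Q (originRefl hM) hnorm))

theorem conjAutColl_mem_centralizer (α : MulAut Q) : conjAutColl hM hσ α ∈ 𝒞 := by
  rw [Subgroup.mem_centralizer_iff]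
  rintro _ ⟨i, rfl⟩
  ext x : 2
  have hc := commute_autColl_originRefl hM α i
  change (originRefl hM i)⁻¹ * (autColl α * x * (autColl α)⁻¹) * originRefl hM i =
    autColl α * ((originRefl hM i)⁻¹ * x * originRefl hM i) * (autColl α)⁻¹
  rw [originRefl_inv, show ∀ r A : Equiv.Perm (Q × Q),
    r * (A * x * A⁻¹) * r = r * A * x * (A⁻¹ * r) by intros; group, ← hc.eq, hc.inv_left.eq]
  group

theorem conjAutM0_translMZero_two (a : Q) :
    conjAutM0 Q (originRefl hM) hnorm 2 (translMZero hM hσ a) = (translMZero hM hσ a)⁻¹ :=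
  Subtype.ext <| (reflT_mul_transl_mul_reflT hM a).trans (transl_inv hM a).symm

theorem conjAutM0_translMZero_zero_mul_one (a : Q) :
    conjAutM0 Q (originRefl hM) hnorm 0 (translMZero hM hσ a) *
      conjAutM0 Q (originRefl hM) hnorm 1 (translMZero hM hσ a) = translMZero hM hσ a :=
  Subtype.ext (hTransl_mul_vTransl hM a)

theorem translMZero_mul (a b : Q) :
    translMZero hM hσ (a * b) = conjAutM0 Q (originRefl hM) hnorm 0 (translMZero hM hσ a) *
      translMZero hM hσ b * conjAutM0 Q (originRefl hM) hnorm 1 (translMZero hM hσ a) :=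
  Subtype.ext (hTransl_mul_transl_mul_vTransl hM a b).symm

theorem exists_apply_translMZero_eq {θ : MulAut (loopNet Q).MZero} (hθ : θ ∈ 𝒞) (a : Q) :
    ∃ b, θ (translMZero hM hσ a) = translMZero hM hσ b := by
  set u := θ (translMZero hM hσ a)
  have h₂ : conjAutM0 Q (originRefl hM) hnorm 2 u = u⁻¹ := by
    rw [MulAut.apply_apply_of_mem_centralizer hθ ⟨2, rfl⟩, conjAutM0_translMZero_two, map_inv]
  have h₀₁ :
      conjAutM0 Q (originRefl hM) hnorm 0 u * conjAutM0 Q (originRefl hM) hnorm 1 u = u := by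
    rw [MulAut.apply_apply_of_mem_centralizer hθ ⟨0, rfl⟩,
      MulAut.apply_apply_of_mem_centralizer hθ ⟨1, rfl⟩, ← map_mul,
      conjAutM0_translMZero_zero_mul_one]
  obtain ⟨b, hb⟩ := exists_eq_transl_of_conj hM (Subgroup.mem_inf.1 u.2).2
    (congrArg Subtype.val h₂) (congrArg Subtype.val h₀₁)
  exact ⟨b, Subtype.ext hb⟩

theorem eq_of_mem_centralizer_of_apply_translMZero {φ ψ : MulAut (loopNet Q).MZero}
    (hφ : φ ∈ 𝒞) (hψ : ψ ∈ 𝒞) (h : ∀ a, φ (translMZero hM hσ a) = ψ (translMZero hM hσ a)) :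
    φ = ψ := by
  refine MulEquiv.toMonoidHom_injective <|
    Subgroup.monoidHom_ext_of_eq_closure (MZero_eq_translGroup hM hσ) ?_
  rintro _ hx ((⟨a, rfl⟩ | ⟨a, rfl⟩) | ⟨a, rfl⟩)
  · exact h a
  · change φ (conjAutM0 Q (originRefl hM) hnorm 0 (translMZero hM hσ a)) =
      ψ (conjAutM0 Q (originRefl hM) hnorm 0 (translMZero hM hσ a))
    rw [← MulAut.apply_apply_of_mem_centralizer hφ ⟨0, rfl⟩,
      ← MulAut.apply_apply_of_mem_centralizer hψ ⟨0, rfl⟩, h]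
  · change φ (conjAutM0 Q (originRefl hM) hnorm 1 (translMZero hM hσ a)) =
      ψ (conjAutM0 Q (originRefl hM) hnorm 1 (translMZero hM hσ a))
    rw [← MulAut.apply_apply_of_mem_centralizer hφ ⟨1, rfl⟩,
      ← MulAut.apply_apply_of_mem_centralizer hψ ⟨1, rfl⟩, h]

theorem conjAutColl_apply_translMZero (α : MulAut Q) (a : Q) :
    conjAutColl hM hσ α (translMZero hM hσ a) = translMZero hM hσ (α a) :=
  Subtype.ext (autColl_mul_transl_mul_inv α a)

theorem conjAutColl_injective : Function.Injective (conjAutColl hM hσ) := by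
  refine (injective_iff_map_eq_one _).2 fun α hα => MulEquiv.ext fun a => ?_
  apply translMZero_injective hM hσ
  rw [← conjAutColl_apply_translMZero, hα, MulAut.one_apply, MulAut.one_apply]

theorem exists_conjAutColl_eq {θ : MulAut (loopNet Q).MZero} (hθ : θ ∈ 𝒞) :
    ∃ α, conjAutColl hM hσ α = θ := by
  choose f hf using exists_apply_translMZero_eq hM hσ hnorm hθ
  choose g hg using exists_apply_translMZero_eq hM hσ hnorm (inv_mem hθ)
  have hgf : ∀ a, g (f a) = a := fun a => translMZero_injective hM hσ <| by
    rw [← hg, ← hf, MulAut.inv_apply_self]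
  have hfg : ∀ a, f (g a) = a := fun a => translMZero_injective hM hσ <| by
    rw [← hf, ← hg, MulAut.apply_inv_self]
  have hmul : ∀ a b, f (a * b) = f a * f b := fun a b => translMZero_injective hM hσ <| by
    rw [← hf, translMZero_mul hM hσ hnorm, map_mul, map_mul,
      ← MulAut.apply_apply_of_mem_centralizer hθ ⟨0, rfl⟩,
      ← MulAut.apply_apply_of_mem_centralizer hθ ⟨1, rfl⟩, hf, hf, ← translMZero_mul]
  let α : MulAut Q := ⟨⟨f, g, hgf, hfg⟩, hmul⟩
  refine ⟨α, eq_of_mem_centralizer_of_apply_translMZero hM hσ hnorm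
    (conjAutColl_mem_centralizer hM hσ hnorm α) hθ fun a => ?_⟩
  rw [conjAutColl_apply_translMZero, hf]
  rfl

noncomputable def mulAutEquivCentralizer : MulAut Q ≃* 𝒞 :=
  MulEquiv.ofBijective
    ((conjAutColl hM hσ).codRestrict _ (conjAutColl_mem_centralizer hM hσ hnorm))
    ⟨fun _ _ h => conjAutColl_injective hM hσ (congrArg Subtype.val h),
      fun θ => (exists_conjAutColl_eq hM hσ hnorm θ.2).imp fun _ h => Subtype.ext h⟩

end Centralizer

end MoufangNet

/-- Let `Q` be a Moufang loop and `N` its associated `3`-net, `M` the group of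
collineations generated by the Bol reflections of `N`, `M₀` the direction preserving
part of `M`, and `S ≅ S₃` the group generated by the three Bol reflections
`σ 0, σ 1, σ 2` whose axes contain the origin, acting on `M₀` by conjugation. Then
`Aut(Q)` is isomorphic to the centralizer of `S` in `Aut(M₀)`. -/
theorem aut_loop_iso_centralizer_of_S (Q : Type*) [Loop Q] (hMouf : IsMoufang Q)
    (σ : Fin 3 → Equiv.Perm (Q × Q))
    (hσ : ∀ i, (Loop.loopNet Q).BolSpec i (Loop.originLine Q i) (σ i) ∧
      (Loop.loopNet Q).IsColl (σ i))
    (hnorm : ∀ i, ∀ x ∈ (Loop.loopNet Q).MZero,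
      (σ i)⁻¹ * x * σ i ∈ (Loop.loopNet Q).MZero ∧
        σ i * x * (σ i)⁻¹ ∈ (Loop.loopNet Q).MZero) :
    Nonempty (MulAut Q ≃*
      ↥(Subgroup.centralizer (Set.range (conjAutM0 Q σ hnorm)))) := by
  obtain rfl : σ = MoufangNet.originRefl hMouf :=
    funext fun i => MoufangNet.eq_originRefl_of_bolSpec hMouf i (hσ i).1
  have hrefl : ∀ i, (Loop.loopNet Q).IsBolRefl (Loop.originLine Q i)
      (MoufangNet.originRefl hMouf i) :=
    fun i => ⟨⟨i, MoufangNet.originLine_mem i, (hσ i).1⟩, (hσ i).2⟩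
  exact ⟨MoufangNet.mulAutEquivCentralizer hMouf hrefl hnorm⟩
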